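/- Let α ≥ 1, θ ∈ (0,1), h the density of X + θZ with X ~ Gamma(α,1), Z ~ Exponential(1) independent, and g_{α+1} the Gamma(α+1,1) density. Then h'(x)/g'_{α+1}(x) is strictly decreasing on (0, α) and strictly decreasing on (α, ∞). -/

import Mathlib

open Real Set

noncomputable def gammaDens (α t : ℝ) : ℝ := t ^ (α - 1) * Real.exp (-t) / Real.Gamma α

noncomputable def convDens (α θ x : ℝ) : ℝ :=
  ∫ t in (0:ℝ)..x, gammaDens α (x - t) * (θ⁻¹ * Real.exp (-t / θ))

/-!
Put `c = θ⁻¹ - 1 > 0` and `ψ(x) = ∫₀ˣ s^(α-1) e^(cs) ds`. Substituting `s = x - t` gives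
`h(x) = θ⁻¹ e^(-x/θ) ψ(x) / Γ(α)`, and the ratio becomes `α θ⁻¹ N / D` with
`N = x^(α-1) - θ⁻¹ e^(-cx) ψ` and `D = (α - x) x^(α-1)`. The derivative of `N / D` is
`-x^(α-2) e^(-cx) Φ / D²`, so everything reduces to `Φ > 0` on `(0, ∞)`.

For `Φ = x^(α-1) e^(cx) Q - θ⁻¹ P ψ`, with the quadratics `P`, `Q` below, `Φ(0) = 0`,
`Φ(α) > 0`, and the Wronskian `Φ'P - ΦP'` has the sign of `α - x`. The concave quadratic `P`
has `P(0) ≥ 0 > P(α)`, so it changes sign exactly once, at some `r < α`. Hence `Φ / P`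
increases from `0` on `[0, r)`, increases up to the negative value `Φ(α) / P(α)` on `(r, α]`
and decreases beyond `α`; this gives `Φ > 0` away from `r`, while `Φ(r) = r^(α-1) e^(cr) Q(r)`
is positive directly.
When `α = 1`, `P(0) = 0` and on `(0, r)` one uses `ψ = (e^(cx) - 1) / c` instead.
-/

namespace GammaExpConv

variable {α c x : ℝ}

lemma rpow_le_exp_mul_sub_one {u : ℝ} (hu : 0 < u) {k : ℝ} (hk : 0 ≤ k) :
    u ^ k ≤ exp (k * (u - 1)) := by
  rw [rpow_def_of_pos hu, mul_comm]
  gcongr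
  exact log_le_sub_one_of_pos hu

lemma rpow_lt_exp_mul_sub_one {u : ℝ} (hu : 0 < u) (hu1 : u ≠ 1) {k : ℝ} (hk : 0 < k) :
    u ^ k < exp (k * (u - 1)) := by
  rw [rpow_def_of_pos hu, mul_comm]
  gcongr
  exact log_lt_sub_one_of_pos hu hu1

noncomputable def psi (α c x : ℝ) : ℝ := ∫ s in (0:ℝ)..x, s ^ (α - 1) * exp (c * s)

lemma continuous_rpow_mul_exp (hα : 1 ≤ α) (c : ℝ) :
    Continuous fun s : ℝ => s ^ (α - 1) * exp (c * s) :=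
  (continuous_rpow_const (by linarith)).mul (by fun_prop)

lemma hasDerivAt_psi (hα : 1 ≤ α) (c x : ℝ) :
    HasDerivAt (psi α c) (x ^ (α - 1) * exp (c * x)) x :=
  (continuous_rpow_mul_exp hα c).integral_hasStrictDerivAt 0 x |>.hasDerivAt

lemma continuous_psi (hα : 1 ≤ α) (c : ℝ) : Continuous (psi α c) :=
  continuous_iff_continuousAt.2 fun x => (hasDerivAt_psi hα c x).continuousAt

lemma psi_zero : psi α c 0 = 0 := intervalIntegral.integral_same

lemma psi_one (hc : c ≠ 0) (x : ℝ) : psi 1 c x = (exp (c * x) - 1) / c := by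
  have hderiv (s : ℝ) : HasDerivAt (fun u => exp (c * u) / c) (exp (c * s)) s := by
    simpa [hc] using ((hasDerivAt_id s).const_mul c).exp.div_const c
  simp only [psi, sub_self, rpow_zero, one_mul]
  rw [intervalIntegral.integral_eq_sub_of_hasDerivAt (fun s _ => hderiv s)
    ((by fun_prop : Continuous fun s => exp (c * s)).intervalIntegrable _ _)]
  simp [sub_div]

lemma hasDerivAt_rpow_sub_one (hx : 0 < x) :
    HasDerivAt (fun y => y ^ (α - 1)) ((α - 1) * x ^ (α - 1) / x) x := by
  convert hasDerivAt_rpow_const (p := α - 1) (Or.inl hx.ne') using 1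
  rw [rpow_sub_one hx.ne' (α - 1), mul_div_assoc]

def P (α c x : ℝ) : ℝ := α * (α - 1 - x) + c * x * (α - x)

def Q (α c x : ℝ) : ℝ := x * (α - 1 - x) + c * x * (α - x)

noncomputable def Phi (α c x : ℝ) : ℝ :=
  x ^ (α - 1) * exp (c * x) * Q α c x - (1 + c) * P α c x * psi α c x

lemma P_zero : P α c 0 = α * (α - 1) := by simp [P]

lemma P_self : P α c α = -α := by simp [P]

lemma Q_eq_P_add : Q α c x = P α c x + (α - x) * (x - (α - 1)) := by unfold P Q; ring

lemma Phi_zero : Phi α c 0 = 0 := by simp [Phi, Q, psi_zero]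

lemma hasDerivAt_P (x : ℝ) : HasDerivAt (P α c) (α * (c - 1) - 2 * c * x) x := by
  have h : HasDerivAt (fun y => α * (α - 1 - y) + c * y * (α - y))
      (0 * (α - 1 - x) + α * (0 - 1) + ((0 * x + c * 1) * (α - x) + c * x * (0 - 1))) x := by
    apply_rules [HasDerivAt.add, HasDerivAt.mul, HasDerivAt.sub, hasDerivAt_id',
      hasDerivAt_const, hasDerivAt_neg]
  exact h.congr_deriv (by ring)

lemma continuous_P : Continuous (P α c) := by unfold P; fun_prop

lemma continuous_Phi (hα : 1 ≤ α) : Continuous (Phi α c) := by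
  have : Continuous (Q α c) := by unfold Q; fun_prop
  exact ((continuous_rpow_mul_exp hα c).mul this).sub
    ((continuous_const.mul continuous_P).mul (continuous_psi hα c))

noncomputable def W (α c x : ℝ) : ℝ :=
  x ^ (α - 1) * exp (c * x) * (c * (α - x) * ((x - (α - 1)) ^ 2 + (α - 1)))

lemma sq_sub_add_pos (hα : 1 ≤ α) (hx : 0 < x) : 0 < (x - (α - 1)) ^ 2 + (α - 1) := by
  rcases hα.eq_or_lt with rfl | hα <;> nlinarith

lemma W_pos (hα : 1 ≤ α) (hc : 0 < c) (hx : 0 < x) (hxα : x < α) : 0 < W α c x := by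
  have := sq_sub_add_pos hα hx
  have := sub_pos.2 hxα
  unfold W
  positivity

lemma W_neg (hα : 1 ≤ α) (hc : 0 < c) (hxα : α < x) : W α c x < 0 := by
  have hx : 0 < x := by linarith
  have := mul_pos (mul_pos (rpow_pos_of_pos hx (α - 1)) (exp_pos (c * x)))
    (mul_pos (mul_pos hc (sub_pos.2 hxα)) (sq_sub_add_pos hα hx))
  unfold W
  nlinarith

lemma hasDerivAt_Phi_div_P (hα : 1 ≤ α) (hx : 0 < x) (hP : P α c x ≠ 0) :
    HasDerivAt (fun y => Phi α c y / P α c y) (W α c x / P α c x ^ 2) x := by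
  have hQ : HasDerivAt (Q α c) (α - 1 - 2 * x + c * (α - 2 * x)) x := by
    have h : HasDerivAt (fun y => y * (α - 1 - y) + c * y * (α - y))
        (1 * (α - 1 - x) + x * (0 - 1) + ((0 * x + c * 1) * (α - x) + c * x * (0 - 1))) x := by
      apply_rules [HasDerivAt.add, HasDerivAt.mul, HasDerivAt.sub, hasDerivAt_id',
        hasDerivAt_const, hasDerivAt_neg]
    exact h.congr_deriv (by ring)
  have hexp : HasDerivAt (fun y => exp (c * y)) (c * exp (c * x)) x := by
    simpa [mul_comm] using ((hasDerivAt_id x).const_mul c).exp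
  have hPhi := (((hasDerivAt_rpow_sub_one (α := α) hx).mul hexp).mul hQ).sub
    (((hasDerivAt_P (α := α) (c := c) x).const_mul (1 + c)).mul (hasDerivAt_psi hα c x))
  refine (hPhi.div (hasDerivAt_P x) hP).congr_deriv ?_
  simp only [Pi.mul_apply, Pi.sub_apply, W, P, Q]
  field_simp
  ring

lemma P_neg_of_lt (hα : 1 ≤ α) (hc : 0 < c) {y t : ℝ} (hy : 0 < y) (hyt : y < t)
    (hP : P α c y ≤ 0) : P α c t < 0 := by
  have hslope : α * (c - 1) ≤ c * y := by
    unfold P at hP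
    nlinarith [mul_nonneg (by linarith : (0:ℝ) ≤ α) (by linarith : (0:ℝ) ≤ α - 1)]
  have hdiff : P α c t - P α c y = (t - y) * (α * (c - 1) - c * (t + y)) := by unfold P; ring
  nlinarith [mul_pos (sub_pos.2 hyt) hc]

lemma P_neg_of_le (hα : 1 ≤ α) (hc : 0 < c) {t : ℝ} (ht : α ≤ t) : P α c t < 0 := by
  rcases ht.eq_or_lt with rfl | ht
  · rw [P_self]; linarith
  · exact P_neg_of_lt hα hc (by linarith) ht (by rw [P_self]; linarith)

lemma strictMonoOn_Phi_div_P (hα : 1 ≤ α) (hc : 0 < c) {a b : ℝ} (ha : 0 ≤ a)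
    (hb : b ≤ α) (hP : ∀ t ∈ Icc a b, P α c t ≠ 0) :
    StrictMonoOn (fun y => Phi α c y / P α c y) (Icc a b) := by
  refine strictMonoOn_of_hasDerivWithinAt_pos (f' := fun t => W α c t / P α c t ^ 2)
    (convex_Icc a b) ((continuous_Phi hα).continuousOn.div continuous_P.continuousOn hP)
    (fun t ht => ?_) (fun t ht => ?_) <;> rw [interior_Icc] at ht
  · exact (hasDerivAt_Phi_div_P hα (ha.trans_lt ht.1)
      (hP t (Ioo_subset_Icc_self ht))).hasDerivWithinAt
  · exact div_pos (W_pos hα hc (ha.trans_lt ht.1) (ht.2.trans_le hb))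
      (pow_two_pos_of_ne_zero (hP t (Ioo_subset_Icc_self ht)))

lemma strictAntiOn_Phi_div_P (hα : 1 ≤ α) (hc : 0 < c) {b : ℝ}
    (hP : ∀ t ∈ Icc α b, P α c t ≠ 0) :
    StrictAntiOn (fun y => Phi α c y / P α c y) (Icc α b) := by
  refine strictAntiOn_of_hasDerivWithinAt_neg (f' := fun t => W α c t / P α c t ^ 2)
    (convex_Icc α b) ((continuous_Phi hα).continuousOn.div continuous_P.continuousOn hP)
    (fun t ht => ?_) (fun t ht => ?_) <;> rw [interior_Icc] at ht
  · exact (hasDerivAt_Phi_div_P hα (by linarith [ht.1])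
      (hP t (Ioo_subset_Icc_self ht))).hasDerivWithinAt
  · exact div_neg_of_neg_of_pos (W_neg hα hc ht.1)
      (pow_two_pos_of_ne_zero (hP t (Ioo_subset_Icc_self ht)))

lemma integral_div_rpow {a r : ℝ} (ha : 0 < a) (hr : -1 < r) :
    ∫ s in (0:ℝ)..a, (s / a) ^ r = a / (r + 1) := by
  rw [intervalIntegral.integral_comp_div (fun u => u ^ r) ha.ne', zero_div, div_self ha.ne',
    integral_rpow (Or.inl hr), one_rpow, zero_rpow (by linarith), smul_eq_mul]
  ring

/-- The integrand dominates `α^(α-1) e^(cα) (s/α)^(α-1+cα)`, because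
`(s/α)^(cα) ≤ e^(c(s-α))`, and this power integrates to exactly
`α^(α-1) e^(cα) / (1 + c)`. -/
lemma rpow_mul_exp_lt_one_add_mul_psi (hα : 1 ≤ α) (hc : 0 < c) :
    α ^ (α - 1) * exp (c * α) < (1 + c) * psi α c α := by
  have hα0 : 0 < α := by linarith
  have hr : 0 ≤ α - 1 + c * α := by nlinarith
  have hsplit (s : ℝ) (hs : 0 < s) : α ^ (α - 1) * exp (c * α) * (s / α) ^ (α - 1 + c * α)
      = s ^ (α - 1) * (exp (c * α) * (s / α) ^ (c * α)) := by
    rw [rpow_add (div_pos hs hα0), div_rpow hs.le hα0.le]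
    field_simp
  have hexp (s : ℝ) : exp (c * α) * exp (c * α * (s / α - 1)) = exp (c * s) := by
    rw [← exp_add]; congr 1; field_simp; ring
  have hlt : ∫ s in (0:ℝ)..α, α ^ (α - 1) * exp (c * α) * (s / α) ^ (α - 1 + c * α)
      < psi α c α := by
    refine intervalIntegral.integral_lt_integral_of_continuousOn_of_le_of_exists_lt hα0
      (continuous_const.mul
        ((continuous_id.div_const α).rpow_const fun _ => Or.inr hr)).continuousOn
      (continuous_rpow_mul_exp hα c).continuousOn
      (fun s hs => ?_) ⟨α / 2, ⟨by linarith, by linarith⟩, ?_⟩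
    · rw [hsplit s hs.1, ← hexp s]
      refine mul_le_mul_of_nonneg_left ?_ (rpow_nonneg hs.1.le _)
      exact mul_le_mul_of_nonneg_left
        (rpow_le_exp_mul_sub_one (div_pos hs.1 hα0) (by positivity)) (exp_pos _).le
    · rw [hsplit _ (by linarith), ← hexp (α / 2)]
      refine mul_lt_mul_of_pos_left ?_ (by positivity)
      refine mul_lt_mul_of_pos_left (rpow_lt_exp_mul_sub_one (by positivity) ?_ (by positivity))
        (exp_pos _)
      rw [div_right_comm, div_self hα0.ne']
      norm_num
  rw [intervalIntegral.integral_const_mul, integral_div_rpow hα0 (by linarith)] at hlt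
  calc α ^ (α - 1) * exp (c * α)
      = (1 + c) * (α ^ (α - 1) * exp (c * α) * (α / (α - 1 + c * α + 1))) := by
        rw [show α - 1 + c * α + 1 = α * (1 + c) by ring]
        field_simp
    _ < (1 + c) * psi α c α := by gcongr

lemma Phi_self_pos (hα : 1 ≤ α) (hc : 0 < c) : 0 < Phi α c α := by
  have hψ := rpow_mul_exp_lt_one_add_mul_psi hα hc
  have hQ : Q α c α = -α := by simp [Q]
  rw [Phi, hQ, P_self]
  nlinarith

lemma Phi_pos_of_P_neg (hα : 1 ≤ α) (hc : 0 < c) (hx : 0 < x) (hP : P α c x < 0) :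
    0 < Phi α c x := by
  have hΛα : Phi α c α / P α c α < 0 := by
    rw [P_self]
    exact div_neg_of_pos_of_neg (Phi_self_pos hα hc) (by linarith)
  have hΛx : Phi α c x / P α c x < 0 := by
    rcases lt_trichotomy x α with hxα | rfl | hxα
    · have hP' (t : ℝ) (ht : t ∈ Icc x α) : P α c t ≠ 0 := by
        rcases ht.1.eq_or_lt with rfl | hxt
        · exact hP.ne
        · exact (P_neg_of_lt hα hc hx hxt hP.le).ne
      exact (strictMonoOn_Phi_div_P hα hc hx.le le_rfl hP' ⟨le_rfl, hxα.le⟩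
        ⟨hxα.le, le_rfl⟩ hxα).trans hΛα
    · exact hΛα
    · exact (strictAntiOn_Phi_div_P hα hc (fun t ht => (P_neg_of_le hα hc ht.1).ne)
        ⟨le_rfl, hxα.le⟩ ⟨hxα.le, le_rfl⟩ hxα).trans hΛα
  rw [← div_mul_cancel₀ (Phi α c x) hP.ne]
  exact mul_pos_of_neg_of_neg hΛx hP

lemma Phi_pos_of_P_eq_zero (hα : 1 ≤ α) (hc : 0 < c) (hx : 0 < x) (hP : P α c x = 0) :
    0 < Phi α c x := by
  have hxα : x < α := lt_of_not_ge fun h => (P_neg_of_le hα hc h).ne hP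
  have hx1 : α - 1 < x := by
    by_contra! h
    unfold P at hP
    nlinarith [mul_pos (mul_pos hc hx) (sub_pos.2 hxα)]
  rw [Phi, Q_eq_P_add, hP, mul_zero, zero_mul, sub_zero, zero_add]
  have := sub_pos.2 hxα
  have := sub_pos.2 hx1
  positivity

lemma Phi_pos_of_P_pos (hα : 1 < α) (hc : 0 < c) (hx : 0 < x) (hP : 0 < P α c x) :
    0 < Phi α c x := by
  have hxα : x < α := lt_of_not_ge fun h => (P_neg_of_le hα.le hc h).not_gt hP
  have hP' (t : ℝ) (ht : t ∈ Icc 0 x) : P α c t ≠ 0 := by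
    rcases ht.1.eq_or_lt with rfl | ht0
    · rw [P_zero]
      nlinarith
    · rcases ht.2.eq_or_lt with rfl | htx
      · exact hP.ne'
      · exact fun h => (P_neg_of_lt hα.le hc ht0 htx h.le).not_gt hP
  have hΛ :=
    strictMonoOn_Phi_div_P hα.le hc le_rfl hxα.le hP' ⟨le_rfl, hx.le⟩ ⟨hx.le, le_rfl⟩ hx
  simp only [Phi_zero, zero_div] at hΛ
  exact (div_pos_iff_of_pos_right hP).1 hΛ

lemma Phi_one_pos (hc : 0 < c) (hx : 0 < x) (hx1 : x < 1) : 0 < Phi 1 c x := by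
  have hid : c * Phi 1 c x = x * (exp (c * x) - (c * x + 1) + c ^ 2 * (1 - x)) := by
    rw [Phi, psi_one hc.ne', P, Q, sub_self, rpow_zero]
    field_simp
    ring
  have := sub_nonneg.2 (add_one_le_exp (c * x))
  have := sub_pos.2 hx1
  refine pos_of_mul_pos_right (a := c) ?_ hc.le
  rw [hid]
  positivity

lemma Phi_pos (hα : 1 ≤ α) (hc : 0 < c) (hx : 0 < x) : 0 < Phi α c x := by
  rcases lt_trichotomy (P α c x) 0 with hP | hP | hP
  · exact Phi_pos_of_P_neg hα hc hx hP
  · exact Phi_pos_of_P_eq_zero hα hc hx hP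
  · rcases hα.eq_or_lt with rfl | hα
    · exact Phi_one_pos hc hx (by unfold P at hP; nlinarith [mul_pos hc hx])
    · exact Phi_pos_of_P_pos hα hc hx hP

noncomputable def N (α c x : ℝ) : ℝ := x ^ (α - 1) - (1 + c) * exp (-(c * x)) * psi α c x

noncomputable def D (α x : ℝ) : ℝ := (α - x) * x ^ (α - 1)

lemma D_ne_zero (hx : 0 < x) (hxα : x ≠ α) : D α x ≠ 0 :=
  mul_ne_zero (sub_ne_zero.2 hxα.symm) (rpow_pos_of_pos hx _).ne'

lemma hasDerivAt_N_div_D (hα : 1 ≤ α) (hx : 0 < x) (hxα : x ≠ α) :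
    HasDerivAt (fun y => N α c y / D α y)
      (-(x ^ (α - 1) * exp (-(c * x)) / x) * Phi α c x / D α x ^ 2) x := by
  have hexp : HasDerivAt (fun y => exp (-(c * y))) (-c * exp (-(c * x))) x := by
    simpa [mul_comm] using ((hasDerivAt_id x).const_mul c).neg.exp
  have hN := (hasDerivAt_rpow_sub_one (α := α) hx).sub
    ((hexp.const_mul (1 + c)).mul (hasDerivAt_psi hα c x))
  have hD := ((hasDerivAt_id x).const_sub α).mul (hasDerivAt_rpow_sub_one (α := α) hx)
  refine (hN.div hD (D_ne_zero hx hxα)).congr_deriv ?_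
  simp only [Pi.mul_apply, Pi.sub_apply, id, D, Phi, P, Q, exp_neg]
  field_simp
  ring

lemma strictAntiOn_N_div_D (hα : 1 ≤ α) (hc : 0 < c) {S : Set ℝ} (hS : Convex ℝ S)
    (hS0 : S ⊆ Ioi 0) (hSα : α ∉ S) : StrictAntiOn (fun y => N α c y / D α y) S := by
  have hderiv (t : ℝ) (ht : t ∈ S) :=
    hasDerivAt_N_div_D (c := c) hα (hS0 ht) (ne_of_mem_of_not_mem ht hSα)
  refine strictAntiOn_of_hasDerivWithinAt_neg hS
    (fun t ht => (hderiv t ht).continuousAt.continuousWithinAt)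
    (fun t ht => (hderiv t (interior_subset ht)).hasDerivWithinAt) (fun t ht => ?_)
  have ht := interior_subset ht
  have ht0 : 0 < t := hS0 ht
  exact div_neg_of_neg_of_pos (mul_neg_of_neg_of_pos (neg_neg_of_pos (by positivity))
    (Phi_pos hα hc ht0)) (pow_two_pos_of_ne_zero (D_ne_zero ht0 (ne_of_mem_of_not_mem ht hSα)))

lemma convDens_eq (α θ x : ℝ) :
    convDens α θ x = θ⁻¹ * exp (-x / θ) * psi α (θ⁻¹ - 1) x / Gamma α := by
  have hsub := intervalIntegral.integral_comp_sub_left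
    (fun s => gammaDens α s * (θ⁻¹ * exp (-(x - s) / θ))) x (a := 0) (b := x)
  simp only [sub_sub_cancel, sub_self, sub_zero] at hsub
  rw [convDens, hsub, psi, ← intervalIntegral.integral_const_mul,
    ← intervalIntegral.integral_div]
  refine intervalIntegral.integral_congr fun s _ => ?_
  have he : exp (-s) * exp (-(x - s) / θ) = exp (-x / θ) * exp ((θ⁻¹ - 1) * s) := by
    rw [← exp_add, ← exp_add]
    ring_nf
  simp only [gammaDens]
  linear_combination (s ^ (α - 1) * θ⁻¹ / Gamma α) * he

lemma hasDerivAt_convDens (hα : 1 ≤ α) (θ x : ℝ) :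
    HasDerivAt (convDens α θ) (θ⁻¹ * exp (-x) * N α (θ⁻¹ - 1) x / Gamma α) x := by
  have hexp : HasDerivAt (fun y => exp (-y / θ)) (-θ⁻¹ * exp (-x / θ)) x := by
    simpa [div_eq_mul_inv, mul_comm] using ((hasDerivAt_neg x).div_const θ).exp
  have h := ((hexp.const_mul θ⁻¹).mul (hasDerivAt_psi hα (θ⁻¹ - 1) x)).div_const (Gamma α)
  rw [show convDens α θ = _ from funext (convDens_eq α θ)]
  refine h.congr_deriv ?_
  have h1 : exp (-x / θ) = exp (-x) * exp (-((θ⁻¹ - 1) * x)) := by rw [← exp_add]; ring_nf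
  have h2 : exp (-((θ⁻¹ - 1) * x)) * exp ((θ⁻¹ - 1) * x) = 1 := by rw [← exp_add]; simp
  rw [N, h1]
  linear_combination (θ⁻¹ * exp (-x) * x ^ (α - 1) / Gamma α) * h2

lemma hasDerivAt_gammaDens_add_one (hx : 0 < x) :
    HasDerivAt (gammaDens (α + 1)) (exp (-x) * D α x / Gamma (α + 1)) x := by
  have h := ((hasDerivAt_rpow_const (p := α) (Or.inl hx.ne')).mul
    (hasDerivAt_neg x).exp).div_const (Gamma (α + 1))
  rw [show gammaDens (α + 1) = fun t => t ^ α * exp (-t) / Gamma (α + 1) by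
    ext t; simp [gammaDens]]
  refine h.congr_deriv ?_
  rw [D, show x ^ α = x ^ (α - 1) * x by rw [← rpow_add_one hx.ne']; ring_nf]
  ring

lemma deriv_convDens_div_deriv_gammaDens (hα : 1 ≤ α) (θ : ℝ) (hx : 0 < x) :
    deriv (convDens α θ) x / deriv (gammaDens (α + 1)) x
      = α * θ⁻¹ * (N α (θ⁻¹ - 1) x / D α x) := by
  rw [(hasDerivAt_convDens hα θ x).deriv, (hasDerivAt_gammaDens_add_one hx).deriv,
    Gamma_add_one (by linarith)]
  have := (Gamma_pos_of_pos (by linarith : 0 < α)).ne'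
  field_simp

theorem strictAntiOn_deriv_convDens_div_deriv_gammaDens (hα : 1 ≤ α) {θ : ℝ}
    (hθ : θ ∈ Ioo 0 1) {S : Set ℝ} (hS : Convex ℝ S) (hS0 : S ⊆ Ioi 0) (hSα : α ∉ S) :
    StrictAntiOn (fun x => deriv (convDens α θ) x / deriv (gammaDens (α + 1)) x) S := by
  have hc : 0 < θ⁻¹ - 1 := sub_pos.2 ((one_lt_inv₀ hθ.1).2 hθ.2)
  intro a ha b hb hab
  simp only [deriv_convDens_div_deriv_gammaDens hα θ (hS0 ha),
    deriv_convDens_div_deriv_gammaDens hα θ (hS0 hb)]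
  have := hθ.1
  exact mul_lt_mul_of_pos_left (strictAntiOn_N_div_D hα hc hS hS0 hSα ha hb hab) (by positivity)

end GammaExpConv

theorem stmt_11 (α θ : ℝ) (hα : 1 ≤ α) (hθ : θ ∈ Ioo (0:ℝ) 1) :
    StrictAntiOn (fun x => deriv (convDens α θ) x / deriv (gammaDens (α + 1)) x)
      (Ioo (0:ℝ) α) ∧
    StrictAntiOn (fun x => deriv (convDens α θ) x / deriv (gammaDens (α + 1)) x)
      (Ioi α) :=
  ⟨GammaExpConv.strictAntiOn_deriv_convDens_div_deriv_gammaDens hα hθ (convex_Ioo 0 α)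
      (fun _ hx => hx.1) fun h => h.2.false,
    GammaExpConv.strictAntiOn_deriv_convDens_div_deriv_gammaDens hα hθ (convex_Ioi α)
      (fun _ hx => (zero_lt_one.trans_le hα).trans hx) (lt_irrefl α)⟩
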